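/- arXiv:1405.4026 — 3 statements merged into one kernel-verified Lean document; each statement's English description precedes it below -/
import Mathlib

section
/- Every idempotent element of a commutative Z-graded ring is homogeneous of degree zero. -/
/-!
For every ring map `f : A → S`, sending `a` to `∑ᵢ f(aᵢ) Tⁱ` is a ring map `A → S[ι]`. When `S = A/𝔭`
is a domain, so is `S[ι]` because `ι` has unique sums, and the image of an idempotent `e` is `0` or
`1`; hence each component `eᵢ` with `i ≠ 0` lies in every prime, i.e. is nilpotent. For `f = id` the
idempotents `∑ᵢ eᵢ Tⁱ` and `e T⁰` therefore differ by a nilpotent, so they are equal, and comparing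
coefficients of `T⁰` gives `e = e₀`.
-/

open DirectSum AddMonoidAlgebra

theorem AddMonoidAlgebra.isNilpotent_single {R M : Type*} [Semiring R] [AddMonoid M] (m : M)
    {r : R} (hr : IsNilpotent r) : IsNilpotent (single m r) := by
  obtain ⟨n, hn⟩ := hr
  exact ⟨n, by rw [single_pow, hn, single_zero]⟩

namespace GradedRing

section Semiring

variable {ι A S σ : Type*} [DecidableEq ι] [AddMonoid ι] [Semiring A] [Semiring S]
  [SetLike σ A] [AddSubmonoidClass σ A] (𝒜 : ι → σ) [GradedRing 𝒜]

noncomputable def toAddMonoidAlgebra (f : A →+* S) : A →+* S[ι] :=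
  (toSemiring
    (fun i ↦ (singleAddHom i).comp (f.toAddMonoidHom.comp (AddSubmonoidClass.subtype (𝒜 i))))
    (by simp [AddMonoidAlgebra.one_def]) (fun _ _ ↦ by simp [single_mul_single])).comp
    (decomposeRingEquiv 𝒜).toRingHom

theorem coeff_toAddMonoidAlgebra (f : A →+* S) (a : A) (i : ι) :
    (toAddMonoidAlgebra 𝒜 f a).coeff i = f (decompose 𝒜 a i) := by
  rw [toAddMonoidAlgebra, RingHom.comp_apply,
    show (decomposeRingEquiv 𝒜).toRingHom a = decompose 𝒜 a from rfl]
  induction decompose 𝒜 a using DirectSum.induction_on with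
  | zero => simp
  | of j x =>
    rw [toSemiring_of]
    obtain rfl | hji := eq_or_ne j i
    · simp
    · rw [of_eq_of_ne _ _ _ hji.symm]
      simp [coeff_single, hji]
  | add x y hx hy => rw [map_add, coeff_add, Finsupp.add_apply, hx, hy, DirectSum.add_apply,
      AddMemClass.coe_add, map_add]

theorem toAddMonoidAlgebra_of_mem (f : A →+* S) {a : A} {i : ι} (ha : a ∈ 𝒜 i) :
    toAddMonoidAlgebra 𝒜 f a = single i (f a) := by
  rw [toAddMonoidAlgebra, RingHom.comp_apply,
    show (decomposeRingEquiv 𝒜).toRingHom a = decompose 𝒜 a from rfl, decompose_of_mem 𝒜 ha,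
    toSemiring_of]
  rfl

end Semiring

section CommRing

variable {ι A σ : Type*} [DecidableEq ι] [AddCommMonoid ι] [CommRing A]
  [SetLike σ A] [AddSubmonoidClass σ A] (𝒜 : ι → σ) [GradedRing 𝒜] [UniqueSums ι]

theorem isNilpotent_decompose_of_isIdempotentElem {e : A}
    (he : IsIdempotentElem e) {i : ι} (hi : i ≠ 0) : IsNilpotent (decompose 𝒜 e i : A) := by
  refine nilpotent_iff_mem_prime.mpr fun p _ ↦ ?_
  rw [← Ideal.Quotient.eq_zero_iff_mem, ← coeff_toAddMonoidAlgebra]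
  have hidem := he.map (toAddMonoidAlgebra 𝒜 (Ideal.Quotient.mk p))
  rcases IsIdempotentElem.iff_eq_zero_or_one.mp hidem with h | h <;>
    simp [h, AddMonoidAlgebra.one_def, coeff_single, hi]

theorem isNilpotent_toAddMonoidAlgebra_sub_single_zero {e : A}
    (he : IsIdempotentElem e) :
    IsNilpotent (toAddMonoidAlgebra 𝒜 (RingHom.id A) e - single 0 e) := by
  classical
  rw [← sum_support_decompose 𝒜 e, ← singleAddHom_apply, map_sum, map_sum,
    ← Finset.sum_sub_distrib]
  refine isNilpotent_sum fun i _ ↦ ?_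
  rw [toAddMonoidAlgebra_of_mem 𝒜 _ (SetLike.coe_mem _), RingHom.id_apply]
  obtain rfl | hi := eq_or_ne i 0
  · simp
  · have hei := isNilpotent_decompose_of_isIdempotentElem 𝒜 he hi
    exact (Commute.all _ _).isNilpotent_sub (isNilpotent_single i hei) (isNilpotent_single 0 hei)

theorem mem_zero_of_isIdempotentElem {e : A} (he : IsIdempotentElem e) :
    e ∈ 𝒜 0 := by
  have hconst : toAddMonoidAlgebra 𝒜 (RingHom.id A) e = single 0 e :=
    eq_of_isNilpotent_sub_of_isIdempotentElem (he.map _) (he.map singleZeroRingHom)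
      (isNilpotent_toAddMonoidAlgebra_sub_single_zero 𝒜 he)
  have he0 : (decompose 𝒜 e 0 : A) = e := by
    simpa [coeff_toAddMonoidAlgebra, coeff_single] using congr_arg (·.coeff 0) hconst
  exact he0 ▸ SetLike.coe_mem _

end CommRing

end GradedRing

/-- Every idempotent element of a commutative `ℤ`-graded ring is homogeneous of degree zero. -/
theorem stmt0 {A : Type*} [CommRing A] (𝒜 : ℤ → AddSubgroup A) [GradedRing 𝒜]
    (e : A) (he : e * e = e) : e ∈ 𝒜 0 :=
  GradedRing.mem_zero_of_isIdempotentElem 𝒜 he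
end

section
/- Let R be a commutative graded ring. The graded prime spectrum Spec^g(R) is connected if and only if Spec(R_0) is connected, where R_0 is the degree-zero component. -/
/-!
Every idempotent `e` of a graded ring lies in degree zero. For each prime `p`, the homogeneous
core of `p` is prime and contains `e * (1 - e) = 0`, hence contains `e` or `1 - e`; either way
`e - e₀ ∈ p`. So `e - e₀` is nilpotent, and lifting the idempotent class of `e₀ ∈ A₀` modulo the
nilradical gives an idempotent of `A₀` that must equal `e`. Hence `Spec A` is connected exactly
when `Spec A₀` is.

Taking homogeneous cores is a continuous retraction of `Spec A` onto `Spec^g A`. It preserves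
every clopen set `D(e)` because `e` is homogeneous. Therefore the clopen sets of `Spec A` come
from those of `Spec^g A`, and so `Spec^g A` is connected if and only if `Spec A` is.
-/

open DirectSum

namespace PrimeSpectrum

variable {R : Type*} [CommRing R]

theorem eq_zero_of_basicOpen_eq_empty {e : R} (he : IsIdempotentElem e)
    (h : (basicOpen e : Set (PrimeSpectrum R)) = ∅) : e = 0 :=
  eq_of_isNilpotent_sub_of_isIdempotentElem he .zero <| by
    simpa using (basicOpen_eq_bot_iff e).mp (TopologicalSpace.Opens.coe_eq_empty.mp h)

theorem preconnectedSpace_iff :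
    PreconnectedSpace (PrimeSpectrum R) ↔ ∀ e : R, IsIdempotentElem e → e = 0 ∨ e = 1 := by
  rw [preconnectedSpace_iff_clopen]
  constructor
  · intro h e he
    refine (h _ (isClopen_iff.mpr ⟨e, he, rfl⟩)).imp (eq_zero_of_basicOpen_eq_empty he)
      fun huniv => ?_
    have : (basicOpen (1 - e) : Set (PrimeSpectrum R)) = ∅ := by
      rw [← zeroLocus_eq_basicOpen_of_isIdempotentElem e he, ← Set.compl_univ, ← huniv,
        basicOpen_eq_zeroLocus_compl, compl_compl]
    exact (sub_eq_zero.mp (eq_zero_of_basicOpen_eq_empty he.one_sub this)).symm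
  · intro h s hs
    obtain ⟨e, he, rfl⟩ := isClopen_iff.mp hs
    rcases h e he with rfl | rfl <;> simp

theorem connectedSpace_iff :
    ConnectedSpace (PrimeSpectrum R) ↔
      Nontrivial R ∧ ∀ e : R, IsIdempotentElem e → e = 0 ∨ e = 1 := by
  rw [← preconnectedSpace_iff, ← nonempty_iff_nontrivial]
  exact ⟨fun h => ⟨h.toNonempty, h.toPreconnectedSpace⟩,
    fun ⟨h₁, h₂⟩ => @ConnectedSpace.mk _ _ h₂ h₁⟩

end PrimeSpectrum

theorem IsIdempotentElem.mem_of_isNilpotent_sub {R : Type*} [CommRing R] {S : Subring R}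
    {e s : R} (he : IsIdempotentElem e) (hs : s ∈ S) (hn : IsNilpotent (e - s)) : e ∈ S := by
  let f : S →+* R ⧸ nilradical R := (Ideal.Quotient.mk _).comp S.subtype
  have hker (x : S) (hx : x ∈ RingHom.ker f) : IsNilpotent x :=
    (IsNilpotent.map_iff Subtype.val_injective).mp
      (mem_nilradical.mp (Ideal.Quotient.eq_zero_iff_mem.mp hx))
  have hrange : Ideal.Quotient.mk _ e ∈ f.range :=
    ⟨⟨s, hs⟩, (Ideal.Quotient.eq.mpr (mem_nilradical.mpr hn)).symm⟩
  obtain ⟨e', he', hfe'⟩ :=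
    exists_isIdempotentElem_eq_of_ker_isNilpotent f hker _ hrange (he.map _)
  have : (e' : R) = e := eq_of_isNilpotent_sub_of_isIdempotentElem (he'.map S.subtype) he
    (mem_nilradical.mp (Ideal.Quotient.eq.mp hfe'))
  exact this ▸ e'.2

section Homogeneous

variable {ι σ A : Type*} [DecidableEq ι] [AddMonoid ι]

theorem Ideal.mem_homogeneousCore_iff_of_isHomogeneousElem [Semiring A] [SetLike σ A]
    [AddSubmonoidClass σ A] {𝒜 : ι → σ} [GradedRing 𝒜] {I : Ideal A} {x : A}
    (hx : SetLike.IsHomogeneousElem 𝒜 x) : x ∈ (I.homogeneousCore 𝒜).toIdeal ↔ x ∈ I :=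
  ⟨fun h => I.toIdeal_homogeneousCore_le 𝒜 h, Ideal.mem_homogeneousCore_of_homogeneous_of_mem hx⟩

theorem Ideal.mem_homogeneousCore_iff [Semiring A] [SetLike σ A] [AddSubmonoidClass σ A]
    (𝒜 : ι → σ) [GradedRing 𝒜] {I : Ideal A} {x : A} :
    x ∈ (I.homogeneousCore 𝒜).toIdeal ↔ ∀ i, (decompose 𝒜 x i : A) ∈ I := by
  rw [(I.homogeneousCore 𝒜).isHomogeneous.mem_iff]
  exact forall_congr' fun i =>
    Ideal.mem_homogeneousCore_iff_of_isHomogeneousElem ⟨i, SetLike.coe_mem _⟩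

abbrev GradedPrimeSpectrum [CommSemiring A] [SetLike σ A] [AddSubmonoidClass σ A]
    (𝒜 : ι → σ) [GradedRing 𝒜] :=
  {p : PrimeSpectrum A // p.asIdeal.IsHomogeneous 𝒜}

end Homogeneous

section Ordered

variable {ι σ A : Type*} [CommRing A] [AddCommMonoid ι] [LinearOrder ι]
  [IsOrderedCancelAddMonoid ι] [SetLike σ A] [AddSubgroupClass σ A] (𝒜 : ι → σ) [GradedRing 𝒜]

theorem IsIdempotentElem.isNilpotent_sub_decompose_zero {e : A} (he : IsIdempotentElem e) :
    IsNilpotent (e - decompose 𝒜 e 0) := by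
  rw [nilpotent_iff_mem_prime]
  intro p hp
  set I := (p.homogeneousCore 𝒜).toIdeal
  have sub_mem {y : A} (hy : y ∈ I) : y - GradedRing.proj 𝒜 0 y ∈ p :=
    p.toIdeal_homogeneousCore_le 𝒜 (I.sub_mem hy ((p.homogeneousCore 𝒜).isHomogeneous 0 hy))
  have : e * (1 - e) ∈ I := by rw [he.mul_one_sub_self]; exact I.zero_mem
  rcases hp.homogeneousCore.mem_or_mem this with h | h
  · exact sub_mem h
  · have h1 : GradedRing.proj 𝒜 0 1 = 1 := decompose_of_mem_same 𝒜 SetLike.GradedOne.one_mem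
    have := p.neg_mem (sub_mem h)
    rwa [map_sub, h1, neg_sub, sub_sub_sub_cancel_left] at this

theorem IsIdempotentElem.mem_gradeZero {e : A} (he : IsIdempotentElem e) : e ∈ 𝒜 0 :=
  he.mem_of_isNilpotent_sub (S := SetLike.GradeZero.subring 𝒜) (decompose 𝒜 e 0).2
    (he.isNilpotent_sub_decompose_zero 𝒜)

theorem PrimeSpectrum.connectedSpace_iff_connectedSpace_gradeZero :
    ConnectedSpace (PrimeSpectrum A) ↔ ConnectedSpace (PrimeSpectrum (𝒜 0)) := by
  rw [PrimeSpectrum.connectedSpace_iff, PrimeSpectrum.connectedSpace_iff]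
  refine and_congr ⟨fun _ => ⟨0, 1, fun h => zero_ne_one (congrArg Subtype.val h)⟩,
    fun _ => (Subtype.val_injective : Function.Injective ((↑) : 𝒜 0 → A)).nontrivial⟩
    ⟨fun h e he => ?_, fun h e he => ?_⟩
  · exact (h e (congrArg Subtype.val he)).imp Subtype.ext Subtype.ext
  · exact (h ⟨e, he.mem_gradeZero 𝒜⟩ (Subtype.ext he)).imp (congrArg Subtype.val)
      (congrArg Subtype.val)

namespace GradedPrimeSpectrum

def homogeneousCore (p : PrimeSpectrum A) : GradedPrimeSpectrum 𝒜 :=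
  ⟨⟨(p.asIdeal.homogeneousCore 𝒜).toIdeal, p.isPrime.homogeneousCore⟩,
    (p.asIdeal.homogeneousCore 𝒜).isHomogeneous⟩

theorem homogeneousCore_val (p : GradedPrimeSpectrum 𝒜) : homogeneousCore 𝒜 p.1 = p :=
  Subtype.ext <| PrimeSpectrum.ext p.2.toIdeal_homogeneousCore_eq_self

theorem continuous_homogeneousCore : Continuous (homogeneousCore 𝒜) := by
  refine continuous_induced_rng.mpr <|
    PrimeSpectrum.isTopologicalBasis_basic_opens.continuous_iff.mpr ?_
  rintro _ ⟨a, rfl⟩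
  convert isOpen_iUnion fun i => (PrimeSpectrum.basicOpen (decompose 𝒜 a i : A)).isOpen
  ext p
  simp only [Set.mem_preimage, SetLike.mem_coe, PrimeSpectrum.mem_basicOpen, Set.mem_iUnion]
  exact (Ideal.mem_homogeneousCore_iff 𝒜).not.trans not_forall

theorem homogeneousCore_mem_iff_of_isClopen {s : Set (PrimeSpectrum A)} (hs : IsClopen s)
    (p : PrimeSpectrum A) : (homogeneousCore 𝒜 p).1 ∈ s ↔ p ∈ s := by
  obtain ⟨e, he, rfl⟩ := PrimeSpectrum.isClopen_iff.mp hs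
  exact (Ideal.mem_homogeneousCore_iff_of_isHomogeneousElem ⟨0, he.mem_gradeZero 𝒜⟩).not

theorem connectedSpace_iff :
    ConnectedSpace (GradedPrimeSpectrum 𝒜) ↔ ConnectedSpace (PrimeSpectrum A) := by
  refine ⟨fun h => ?_, fun _ => Function.RightInverse.surjective (homogeneousCore_val 𝒜)
    |>.connectedSpace (continuous_homogeneousCore 𝒜)⟩
  rw [connectedSpace_iff_clopen] at h ⊢
  obtain ⟨⟨q⟩, h⟩ := h
  refine ⟨⟨q.1⟩, fun s hs => ?_⟩
  have hs' : s = homogeneousCore 𝒜 ⁻¹' (Subtype.val ⁻¹' s) :=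
    Set.ext fun p => (homogeneousCore_mem_iff_of_isClopen 𝒜 hs p).symm
  rcases h _ (hs.preimage continuous_subtype_val) with h | h <;> rw [hs', h] <;> simp

end GradedPrimeSpectrum

end Ordered

/-- For a commutative `ℤ`-graded ring `A`, the graded prime spectrum (the subspace of the
Zariski spectrum consisting of homogeneous prime ideals) is connected iff the prime spectrum
of the degree-zero part `𝒜 0` is connected. -/
theorem stmt5 {A : Type*} [CommRing A] (𝒜 : ℤ → AddSubgroup A) [GradedRing 𝒜] :
    ConnectedSpace {p : PrimeSpectrum A // p.asIdeal.IsHomogeneous 𝒜} ↔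
      ConnectedSpace (PrimeSpectrum ↥(𝒜 0)) :=
  (GradedPrimeSpectrum.connectedSpace_iff 𝒜).trans
    (PrimeSpectrum.connectedSpace_iff_connectedSpace_gradeZero 𝒜)
end

section
/- Let A be a Z-graded bialgebra over a field k that is positively graded with A_0 a local ring (gr-local), finite-dimensional in each degree. Then A admits an antipode, i.e., there exists a k-linear map S : A → A with S ∗ id = η∘ε = id ∗ S for the convolution product, making A a graded Hopf algebra. -/
/-!
In the convolution algebra of linear endomorphisms of `A` write `id = 1 - g` with
`g = η ∘ ε - id`. The map `g` takes values in the augmentation ideal `I = ker ε` and preserves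
degrees, so `g ^ N` maps `𝒜 n` into `I ^ N ⊓ 𝒜 n`. Since `𝒜 0` is a finite-dimensional local
algebra, its augmentation ideal lies in its Jacobson radical, which is nilpotent; hence `I ^ r`
lies in positive degrees for some `r`, and `I ^ N ⊓ 𝒜 n = 0` once `N ≥ r (n + 1)`. The antipode
is then the geometric series `∑ gⁱ`: because comultiplication respects the grading, on `𝒜 n` it
may be truncated at any length after which the powers of `g` vanish on `𝒜 0, …, 𝒜 n`.
-/

open Coalgebra TensorProduct WithConv DirectSum

section GradedLift
variable {R C M : Type*} [Semiring R] [AddCommMonoid C] [Module R C] [AddCommMonoid M]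
  [Module R M] (𝒜 : ℕ → Submodule R C) [Decomposition 𝒜]

noncomputable def gradedLift (F : ℕ → C →ₗ[R] M) : C →ₗ[R] M :=
  toModule R ℕ M (fun n => F n ∘ₗ (𝒜 n).subtype) ∘ₗ (decomposeLinearEquiv 𝒜).toLinearMap

theorem gradedLift_apply_of_mem (F : ℕ → C →ₗ[R] M) {n : ℕ} {x : C} (hx : x ∈ 𝒜 n) :
    gradedLift 𝒜 F x = F n x := by
  simp only [gradedLift, LinearMap.comp_apply, LinearEquiv.coe_coe, decomposeLinearEquiv_apply]
  rw [decompose_of_mem 𝒜 hx, ← lof_eq_of R, toModule_lof]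
  rfl

end GradedLift

section Convolution
variable {R C B : Type*} [CommSemiring R] [AddCommMonoid C] [Module R C] [CoalgebraStruct R C]

def IsGradedComul (𝒜 : ℕ → Submodule R C) : Prop :=
  ∀ n, ∀ a ∈ 𝒜 n, comul (R := R) a ∈
    ⨆ (p : ℕ × ℕ) (_ : p.1 + p.2 = n), LinearMap.range (map (𝒜 p.1).subtype (𝒜 p.2).subtype)

theorem convMul_apply_mem_mul [Semiring B] [Algebra R B] (f g : WithConv (C →ₗ[R] B))
    {P Q : Submodule R B} (hf : ∀ x, f x ∈ P) (hg : ∀ x, g x ∈ Q) (c : C) :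
    (f * g) c ∈ P * Q := by
  rw [LinearMap.convMul_apply]
  induction comul (R := R) c using TensorProduct.induction_on with
  | zero => simp
  | tmul x y => simpa using Submodule.mul_mem_mul (hf x) (hg y)
  | add s t hs ht => simpa only [map_add] using add_mem hs ht

variable {𝒜 : ℕ → Submodule R C}

theorem IsGradedComul.convMul_apply_mem [Semiring B] [Algebra R B] (h𝒜 : IsGradedComul 𝒜)
    {n : ℕ} {a : C} (ha : a ∈ 𝒜 n) (f g : WithConv (C →ₗ[R] B)) {P : Submodule R B}
    (H : ∀ p q, p + q = n → ∀ x ∈ 𝒜 p, ∀ y ∈ 𝒜 q, f x * g y ∈ P) : (f * g) a ∈ P := by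
  rw [LinearMap.convMul_apply]
  refine Submodule.iSup_induction _
    (motive := fun t => LinearMap.mul' R B (map f.ofConv g.ofConv t) ∈ P) (h𝒜 n a ha)
    (fun pq t ht => ?_) (by simp) (fun s t hs ht => by simpa only [map_add] using add_mem hs ht)
  by_cases hpq : pq.1 + pq.2 = n
  · rw [iSup_pos hpq] at ht
    obtain ⟨s, rfl⟩ := ht
    induction s using TensorProduct.induction_on with
    | zero => simp
    | tmul x y => simpa using H _ _ hpq x x.2 y y.2
    | add s t hs ht => simpa only [map_add] using add_mem hs ht
  · rw [iSup_neg hpq, Submodule.mem_bot] at ht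
    simp [ht]

theorem IsGradedComul.convMul_apply_congr_left [Ring B] [Algebra R B] (h𝒜 : IsGradedComul 𝒜)
    {n : ℕ} {a : C} (ha : a ∈ 𝒜 n) {f f' : WithConv (C →ₗ[R] B)}
    (h : ∀ p ≤ n, ∀ x ∈ 𝒜 p, f x = f' x) (g : WithConv (C →ₗ[R] B)) :
    (f * g) a = (f' * g) a := by
  have : ((f - f') * g) a ∈ (⊥ : Submodule R B) :=
    h𝒜.convMul_apply_mem ha _ _ fun p q hpq x hx y _ => by simp [h p (by omega) x hx]
  simpa [sub_mul, sub_eq_zero] using this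

theorem IsGradedComul.convMul_apply_congr_right [Ring B] [Algebra R B] (h𝒜 : IsGradedComul 𝒜)
    {n : ℕ} {a : C} (ha : a ∈ 𝒜 n) (f : WithConv (C →ₗ[R] B)) {g g' : WithConv (C →ₗ[R] B)}
    (h : ∀ q ≤ n, ∀ y ∈ 𝒜 q, g y = g' y) : (f * g) a = (f * g') a := by
  have : (f * (g - g')) a ∈ (⊥ : Submodule R B) :=
    h𝒜.convMul_apply_mem ha _ _ fun p q hpq x _ y hy => by simp [h q (by omega) y hy]
  simpa [mul_sub, sub_eq_zero] using this

end Convolution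

theorem IsGradedComul.isUnit_one_sub {R C B : Type*} [CommSemiring R] [AddCommMonoid C]
    [Module R C] [Coalgebra R C] [Ring B] [Algebra R B] {𝒜 : ℕ → Submodule R C}
    [Decomposition 𝒜] (h𝒜 : IsGradedComul 𝒜) (g : WithConv (C →ₗ[R] B))
    (hg : ∀ n, ∃ N, ∀ M ≥ N, ∀ a ∈ 𝒜 n, (g ^ M) a = 0) : IsUnit (1 - g) := by
  choose N hN using hg
  set K : ℕ → ℕ := fun n => ∑ p ∈ Finset.range (n + 1), N p
  have hNK {p n : ℕ} (hpn : p ≤ n) : N p ≤ K n :=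
    Finset.single_le_sum (by simp) (Finset.mem_range_succ_iff.2 hpn)
  have hK {p n : ℕ} (hpn : p ≤ n) : K p ≤ K n :=
    Finset.sum_le_sum_of_subset (Finset.range_subset_range.2 (by omega))
  set T : ℕ → WithConv (C →ₗ[R] B) := fun n => ∑ i ∈ Finset.range (K n), g ^ i
  have hT {p n : ℕ} (hpn : p ≤ n) {x : C} (hx : x ∈ 𝒜 p) : T p x = T n x := by
    simp only [T, ofConv_sum, LinearMap.sum_apply]
    refine Finset.sum_subset (Finset.range_subset_range.2 (hK hpn)) fun i _ hi => ?_
    exact hN p i ((hNK le_rfl).trans (by simpa using hi)) x hx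
  set S := toConv (gradedLift 𝒜 fun n => (T n).ofConv)
  have hS {p n : ℕ} (hpn : p ≤ n) {x : C} (hx : x ∈ 𝒜 p) : S x = T n x :=
    (gradedLift_apply_of_mem 𝒜 _ hx).trans (hT hpn hx)
  have hgK {n : ℕ} {a : C} (ha : a ∈ 𝒜 n) : (g ^ K n) a = 0 := hN n _ (hNK le_rfl) a ha
  refine isUnit_iff_exists.2 ⟨S, WithConv.ext <| decompose_lhom_ext 𝒜 fun n =>
    LinearMap.ext fun ⟨a, ha⟩ => ?_, WithConv.ext <| decompose_lhom_ext 𝒜 fun n =>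
    LinearMap.ext fun ⟨a, ha⟩ => ?_⟩
  · show ((1 - g) * S) a = (1 : WithConv (C →ₗ[R] B)) a
    rw [h𝒜.convMul_apply_congr_right ha _ fun q hq y hy => hS hq hy, mul_neg_geom_sum]
    simp [hgK ha]
  · show (S * (1 - g)) a = (1 : WithConv (C →ₗ[R] B)) a
    rw [h𝒜.convMul_apply_congr_left ha (fun q hq y hy => hS hq hy), geom_sum_mul_neg]
    simp [hgK ha]

section Filtration
variable {R A : Type*} [CommSemiring R] [Semiring A] [Algebra R A] (𝒜 : ℕ → Submodule R A)

def gradeGE (d : ℕ) : Submodule R A := ⨆ (i) (_ : d ≤ i), 𝒜 i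

theorem le_gradeGE {d i : ℕ} (h : d ≤ i) : 𝒜 i ≤ gradeGE 𝒜 d :=
  le_iSup₂_of_le i h le_rfl

theorem gradeGE_zero [Decomposition 𝒜] : gradeGE 𝒜 0 = ⊤ := by
  simpa [gradeGE] using (Decomposition.isInternal 𝒜).submodule_iSup_eq_top

theorem disjoint_gradeGE_succ [Decomposition 𝒜] (n : ℕ) : Disjoint (𝒜 n) (gradeGE 𝒜 (n + 1)) :=
  (Decomposition.isInternal 𝒜).submodule_iSupIndep.disjoint_biSup (y := {i | n + 1 ≤ i})
    (by simp)

theorem gradeGE_mul_le [SetLike.GradedMonoid 𝒜] (d e : ℕ) :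
    gradeGE 𝒜 d * gradeGE 𝒜 e ≤ gradeGE 𝒜 (d + e) := by
  simp only [gradeGE, Submodule.iSup_mul, Submodule.mul_iSup, iSup_le_iff]
  intro j hj i hi
  exact Submodule.mul_le.2 fun x hx y hy =>
    le_gradeGE 𝒜 (by omega) (SetLike.GradedMul.mul_mem hx hy)

theorem pow_inf_eq_bot_of_pow_le_gradeGE_one [GradedAlgebra 𝒜] {I : Submodule R A} {r : ℕ}
    (hI : I ^ r ≤ gradeGE 𝒜 1) {n N : ℕ} (hN : r * (n + 1) ≤ N) : I ^ N ⊓ 𝒜 n = ⊥ := by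
  have hpow (m : ℕ) : gradeGE 𝒜 1 ^ m ≤ gradeGE 𝒜 m := by
    induction m with
    | zero => simp [gradeGE_zero]
    | succ m ih =>
      exact (pow_succ (gradeGE 𝒜 1) m).trans_le
        ((mul_le_mul' ih le_rfl).trans (gradeGE_mul_le 𝒜 m 1))
  have hIN : I ^ N ≤ gradeGE 𝒜 (n + 1) := calc
    I ^ N = (I ^ r) ^ (n + 1) * I ^ (N - r * (n + 1)) := by
      rw [← pow_mul, ← pow_add]; congr 1; omega
    _ ≤ gradeGE 𝒜 1 ^ (n + 1) * gradeGE 𝒜 0 := by gcongr; simp [gradeGE_zero]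
    _ ≤ gradeGE 𝒜 (n + 1) := (mul_le_mul' (hpow _) le_rfl).trans (gradeGE_mul_le 𝒜 _ _)
  exact eq_bot_iff.2 fun x hx => (disjoint_gradeGE_succ 𝒜 n).le_bot ⟨hx.2, hIN hx.1⟩

end Filtration

theorem sub_projZero_mem_gradeGE_one {R A : Type*} [CommSemiring R] [Ring A] [Algebra R A]
    (𝒜 : ℕ → Submodule R A) [GradedAlgebra 𝒜] (x : A) :
    x - GradedRing.projZeroRingHom 𝒜 x ∈ gradeGE 𝒜 1 := by
  induction x using Decomposition.inductionOn 𝒜 with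
  | zero => simp
  | @homogeneous i x =>
    obtain ⟨x, hx⟩ := x
    rcases eq_or_ne i 0 with rfl | hi
    · simp [decompose_of_mem_same 𝒜 hx]
    · simpa [decompose_of_mem_ne 𝒜 hx hi] using le_gradeGE 𝒜 (Nat.one_le_iff_ne_zero.2 hi) hx
  | add x y hx hy => simpa [add_sub_add_comm] using add_mem hx hy

theorem IsLocalRing.ker_le_jacobson_bot {R S : Type*} [Ring R] [IsLocalRing R] [Ring S]
    [Nontrivial S] (φ : R →+* S) : RingHom.ker φ ≤ Ideal.jacobson ⊥ := by
  intro x hx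
  refine Ideal.mem_jacobson_iff.2 fun y => ?_
  obtain ⟨u, hu⟩ : IsUnit (y * x + 1) :=
    (isUnit_or_isUnit_of_add_one (a := y * x + 1) (b := -(y * x)) (by abel)).resolve_right
      fun h => by simpa [RingHom.mem_ker.1 hx] using h.map φ
  exact ⟨↑u⁻¹, by rw [Submodule.mem_bot, mul_assoc, ← mul_add_one (↑u⁻¹ : R), ← hu, u.inv_mul,
    sub_self]⟩

theorem exists_pow_ker_le_gradeGE_one {k A : Type*} [Field k] [Ring A] [Algebra k A]
    (𝒜 : ℕ → Submodule k A) [GradedAlgebra 𝒜] [IsLocalRing (𝒜 0)] [FiniteDimensional k (𝒜 0)]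
    (ε : A →ₐ[k] k) (hε : ∀ i ≠ 0, ∀ a ∈ 𝒜 i, ε a = 0) :
    ∃ r, LinearMap.ker ε.toLinearMap ^ r ≤ gradeGE 𝒜 1 := by
  have : IsScalarTower k (𝒜 0) (𝒜 0) := ⟨fun c a b => Subtype.ext (smul_mul_assoc c (a : A) b)⟩
  have := IsArtinianRing.of_finite k (𝒜 0)
  obtain ⟨r, hr⟩ := IsArtinianRing.isNilpotent_jacobson_bot (R := 𝒜 0)
  set π := GradedRing.projZeroRingHom' 𝒜
  set ε₀ : 𝒜 0 →+* k := ε.toRingHom.comp (SetLike.GradeZero.subring 𝒜).subtype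
  have hε₀ (y : A) (hy : y ∈ LinearMap.ker ε.toLinearMap) : π y ∈ RingHom.ker ε₀ := by
    have hpos : gradeGE 𝒜 1 ≤ LinearMap.ker ε.toLinearMap :=
      iSup₂_le fun i hi a ha => hε i (by omega) a ha
    have h := hpos (sub_projZero_mem_gradeGE_one 𝒜 y)
    rw [LinearMap.mem_ker] at hy h
    rw [map_sub, hy, zero_sub, neg_eq_zero] at h
    exact h
  have hπ {j : ℕ} {y : A} (hy : y ∈ LinearMap.ker ε.toLinearMap ^ j) :
      π y ∈ Ideal.jacobson ⊥ ^ j := by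
    induction hy using Submodule.pow_induction_on_right' with
    | algebraMap c =>
      rw [Submodule.pow_zero, Submodule.one_eq_span]
      exact Submodule.mem_span_singleton.2 ⟨_, mul_one _⟩
    | add x y i _ _ hx hy => simpa using add_mem hx hy
    | mul_mem i x _ hx m hm =>
      rw [map_mul, Submodule.pow_succ]
      exact Submodule.mul_mem_mul hx (IsLocalRing.ker_le_jacobson_bot ε₀ (hε₀ m hm))
  refine ⟨r, fun y hy => ?_⟩
  have hπy : π y = 0 := by simpa [hr] using hπ hy
  have h := sub_projZero_mem_gradeGE_one 𝒜 y
  rwa [← GradedRing.coe_projZeroRingHom'_apply, hπy, ZeroMemClass.coe_zero, sub_zero] at h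

section Bialgebra
variable {k A : Type*} [CommRing k] [Ring A] [Bialgebra k A]

theorem one_sub_id_apply_mem_ker_counit (a : A) :
    (1 - toConv (LinearMap.id : A →ₗ[k] A)) a ∈ LinearMap.ker (counit (R := k) (A := A)) := by
  simp [Bialgebra.counit_algebraMap]

theorem pow_one_sub_id_apply_mem_pow_ker_counit (N : ℕ) (a : A) :
    ((1 - toConv (LinearMap.id : A →ₗ[k] A)) ^ N) a ∈
      LinearMap.ker (counit (R := k) (A := A)) ^ N := by
  induction N generalizing a with
  | zero => exact Submodule.mem_one.2 ⟨_, rfl⟩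
  | succ N ih =>
    rw [pow_succ, pow_succ]
    exact convMul_apply_mem_mul _ _ ih one_sub_id_apply_mem_ker_counit a

variable {𝒜 : ℕ → Submodule k A} [SetLike.GradedMonoid 𝒜]

theorem IsGradedComul.convMul_apply_mem_of_mapsTo (h𝒜 : IsGradedComul 𝒜)
    {f g : WithConv (A →ₗ[k] A)} (hf : ∀ n, ∀ x ∈ 𝒜 n, f x ∈ 𝒜 n)
    (hg : ∀ n, ∀ x ∈ 𝒜 n, g x ∈ 𝒜 n) {n : ℕ} {a : A} (ha : a ∈ 𝒜 n) : (f * g) a ∈ 𝒜 n :=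
  h𝒜.convMul_apply_mem ha f g fun p q hpq x hx y hy =>
    hpq ▸ SetLike.GradedMul.mul_mem (hf p x hx) (hg q y hy)

theorem convOne_apply_mem (hε : ∀ i ≠ 0, ∀ a ∈ 𝒜 i, counit (R := k) a = 0) {n : ℕ} {a : A}
    (ha : a ∈ 𝒜 n) : (1 : WithConv (A →ₗ[k] A)) a ∈ 𝒜 n := by
  rcases eq_or_ne n 0 with rfl | hn
  · exact SetLike.algebraMap_mem_graded 𝒜 _
  · simp [hε n hn a ha]

theorem IsGradedComul.pow_one_sub_id_apply_mem (h𝒜 : IsGradedComul 𝒜)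
    (hε : ∀ i ≠ 0, ∀ a ∈ 𝒜 i, counit (R := k) a = 0) (N : ℕ) {n : ℕ} {a : A} (ha : a ∈ 𝒜 n) :
    ((1 - toConv (LinearMap.id : A →ₗ[k] A)) ^ N) a ∈ 𝒜 n := by
  induction N generalizing n a with
  | zero => exact convOne_apply_mem hε ha
  | succ N ih =>
    rw [pow_succ]
    exact h𝒜.convMul_apply_mem_of_mapsTo (fun _ _ => ih)
      (fun _ x hx => by simpa using sub_mem (convOne_apply_mem hε hx) hx) ha

end Bialgebra

/-- A positively graded bialgebra `A` over a field `k`, graded-local (its degree-zero part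
`𝒜 0` is a local ring), of finite type (each `𝒜 i` finite-dimensional), whose
comultiplication and counit respect the grading, admits an antipode: a `k`-linear map
`S : A → A` with `S ∗ id = η ∘ ε = id ∗ S` for the convolution product, making `A` a
(graded) Hopf algebra. -/
theorem stmt13 {k A : Type*} [Field k] [Ring A] [Bialgebra k A]
    (𝒜 : ℕ → Submodule k A) [GradedAlgebra 𝒜]
    (hcomul : ∀ (i : ℕ), ∀ a ∈ 𝒜 i,
      Coalgebra.comul (R := k) a ∈
        ⨆ (p : ℕ × ℕ) (_ : p.1 + p.2 = i),
          LinearMap.range (TensorProduct.map (𝒜 p.1).subtype (𝒜 p.2).subtype))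
    (hcounit : ∀ (i : ℕ), i ≠ 0 → ∀ a ∈ 𝒜 i, Coalgebra.counit (R := k) a = 0)
    (hloc : IsLocalRing ↥(𝒜 0))
    (hfin : ∀ i, FiniteDimensional k ↥(𝒜 i)) :
    ∃ S : A →ₗ[k] A,
      (LinearMap.mul' k A) ∘ₗ (TensorProduct.map S LinearMap.id) ∘ₗ
          (Coalgebra.comul (R := k)) =
        (Algebra.linearMap k A) ∘ₗ (Coalgebra.counit (R := k)) ∧
      (LinearMap.mul' k A) ∘ₗ (TensorProduct.map LinearMap.id S) ∘ₗ
          (Coalgebra.comul (R := k)) =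
        (Algebra.linearMap k A) ∘ₗ (Coalgebra.counit (R := k)) := by
  have := hfin 0
  obtain ⟨r, hr⟩ := exists_pow_ker_le_gradeGE_one 𝒜 (Bialgebra.counitAlgHom k A) hcounit
  set g : WithConv (A →ₗ[k] A) := 1 - toConv LinearMap.id
  have hg (n : ℕ) : ∃ N, ∀ M ≥ N, ∀ a ∈ 𝒜 n, (g ^ M) a = 0 :=
    ⟨r * (n + 1), fun M hM a ha =>
      (Submodule.eq_bot_iff _).1 (pow_inf_eq_bot_of_pow_le_gradeGE_one 𝒜 hr hM) _
        ⟨pow_one_sub_id_apply_mem_pow_ker_counit M a,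
          IsGradedComul.pow_one_sub_id_apply_mem hcomul hcounit M ha⟩⟩
  obtain ⟨S, hS, hS'⟩ := isUnit_iff_exists.1 (IsGradedComul.isUnit_one_sub hcomul g hg)
  rw [sub_sub_cancel] at hS hS'
  exact ⟨S.ofConv, congrArg ofConv hS', congrArg ofConv hS⟩
end
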